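/- arXiv:2205.07189 — 3 statements merged into one kernel-verified Lean document; each statement's English description precedes it below -/
import Mathlib

section
/- For every integer n ≥ 2, the complete graph K_n satisfies χ_vi(K_n) = n + 2. -/
/-! Lower bound: in a proper coloring of `K_n` with at most `n + 1` colors, the vertex `v` and
the `n - 1` incidences `(v, vx)` form a clique of size `n`, and every incidence `(u, uv)` is
adjacent to all of it, so `(u, uv)` receives the single color `f v` missed by that clique.
Since `(u, uv)` and `(v, vu)` are adjacent, `f` is injective; every vertex avoids all `n` colors
`f x`, so all vertices get the one remaining color, which is absurd for two vertices.

Upper bound: color the vertex `v` by `v - 1` (and `0` by `n`) and the incidence `(u, uv)` by `v`,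
except that `(v + 1, {v + 1, v})`, which would clash with the vertex `v + 1`, gets one of the two
spare colors `n + 1`, `n` according to the parity of `v`. -/

open SimpleGraph

variable {V : Type*}

/-- An *incidence* of `G`: a pair `(v, e)` where `e` is an edge of `G` and `v ∈ e`. -/
abbrev Inc (G : SimpleGraph V) : Type _ :=
  {p : V × Sym2 V // p.2 ∈ G.edgeSet ∧ p.1 ∈ p.2}

/-- The elements to be colored in a vi-simultaneous coloring: vertices together with
incidences. -/
abbrev VIElem (G : SimpleGraph V) : Type _ := V ⊕ Inc G

/-- Adjacency between elements of `V(G) ∪ I(G)`: two vertices are adjacent when they are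
adjacent in `G`; a vertex `u` and an incidence `(w, f)` are adjacent when `u ∈ f`; two
distinct incidences `(v, e)`, `(w, f)` are adjacent when `v = w`, or `e = f`, or
`{v, w} = e`, or `{v, w} = f`. -/
def VIAdj (G : SimpleGraph V) : VIElem G → VIElem G → Prop
  | Sum.inl u, Sum.inl w => G.Adj u w
  | Sum.inl u, Sum.inr i => u ∈ i.1.2
  | Sum.inr i, Sum.inl u => u ∈ i.1.2
  | Sum.inr i, Sum.inr j => i ≠ j ∧
      (i.1.1 = j.1.1 ∨ i.1.2 = j.1.2 ∨ s(i.1.1, j.1.1) = i.1.2 ∨ s(i.1.1, j.1.1) = j.1.2)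

/-- A vi-simultaneous proper `k`-coloring of `G`: adjacent or incident elements of
`V(G) ∪ I(G)` receive distinct colors. -/
def IsVIColoring (G : SimpleGraph V) {k : ℕ} (c : VIElem G → Fin k) : Prop :=
  ∀ a b, VIAdj G a b → c a ≠ c b

/-- The vi-simultaneous chromatic number `χ_vi(G)`: the least `k` admitting a
vi-simultaneous proper `k`-coloring. -/
noncomputable def chiVI (G : SimpleGraph V) : ℕ :=
  sInf {k | ∃ c : VIElem G → Fin k, IsVIColoring G c}

/-- `I₂(v)`: the set of second incidences of a vertex `v`, i.e. incidences `(u, e)` with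
`e = {u, v}` and `u ≠ v`. -/
def I2 (G : SimpleGraph V) (v : V) : Set (Inc G) :=
  {i | i.1.1 ≠ v ∧ i.1.2 = s(i.1.1, v)}

/-- A vi-simultaneous `(k, s)`-coloring: a vi-simultaneous proper `k`-coloring in which at
most `s` distinct colors appear on `I₂(v)` for every vertex `v`. -/
def IsVISColoring (G : SimpleGraph V) (s : ℕ) {k : ℕ} (c : VIElem G → Fin k) : Prop :=
  IsVIColoring G c ∧ ∀ v : V, ((fun i => c (Sum.inr i)) '' I2 G v).ncard ≤ s

/-- `χ_{vi,s}(G)`: the least `k` admitting a vi-simultaneous `(k, s)`-coloring. -/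
noncomputable def chiVIS (G : SimpleGraph V) (s : ℕ) : ℕ :=
  sInf {k | ∃ c : VIElem G → Fin k, IsVISColoring G s c}

/-- The maximum degree `Δ(G)` of a finite graph. -/
noncomputable def maxDeg [Fintype V] (G : SimpleGraph V) : ℕ :=
  Finset.univ.sup fun v => (G.neighborSet v).ncard

open Function Finset

lemma Function.Injective.eq_of_notMem_range {α β : Type*} [Fintype α] [Fintype β]
    {φ : α → β} (hφ : Injective φ) (hcard : Fintype.card β ≤ Fintype.card α + 1) {a b : β}
    (ha : a ∉ Set.range φ) (hb : b ∉ Set.range φ) : a = b := by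
  classical
  have hcompl : (univ.image φ)ᶜ.card ≤ 1 := by
    rw [card_compl, card_image_of_injective _ hφ, card_univ]
    omega
  exact card_le_one.1 hcompl a (by simpa using ha) b (by simpa using hb)

def topInc (u v : V) (h : u ≠ v) : Inc (⊤ : SimpleGraph V) :=
  ⟨(u, s(u, v)), by simpa using h, Sym2.mem_mk_left u v⟩

lemma Inc.exists_eq_topInc (i : Inc (⊤ : SimpleGraph V)) : ∃ u v h, i = topInc u v h := by
  obtain ⟨⟨u, e⟩, he, v, hv : e = s(u, v)⟩ := i
  subst hv
  exact ⟨u, v, by simpa using he, rfl⟩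

lemma other_topInc {u v : V} (h : u ≠ v) : Sym2.Mem.other (topInc u v h).2.2 = v :=
  Sym2.congr_right.1 (Sym2.other_spec (topInc u v h).2.2)

lemma viAdj_inl_topInc {w u v : V} (h : u ≠ v) :
    VIAdj ⊤ (Sum.inl w) (Sum.inr (topInc u v h)) ↔ w = u ∨ w = v :=
  Sym2.mem_iff

lemma viAdj_topInc_topInc {u v w x : V} (h : u ≠ v) (h' : w ≠ x) :
    VIAdj ⊤ (Sum.inr (topInc u v h)) (Sum.inr (topInc w x h')) ↔
      ¬(u = w ∧ v = x) ∧ (u = w ∨ v = w ∨ u = x) := by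
  simp only [VIAdj, topInc, ne_eq, Subtype.mk.injEq, Prod.mk.injEq, Sym2.eq_iff]
  grind

section LowerBound

variable [Fintype V] {k : ℕ} {c : VIElem (⊤ : SimpleGraph V) → Fin k}

lemma IsVIColoring.color_topInc_eq (hc : IsVIColoring ⊤ c) (hk : k ≤ Fintype.card V + 1)
    {u u' v : V} (h : u ≠ v) (h' : u' ≠ v) :
    c (Sum.inr (topInc u v h)) = c (Sum.inr (topInc u' v h')) := by
  classical
  let star : V → Fin k := fun x =>
    if hx : x = v then c (Sum.inl v) else c (Sum.inr (topInc v x (Ne.symm hx)))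
  have star_injective : Injective star := by
    intro x y hxy
    by_contra hne
    simp only [star] at hxy
    split_ifs at hxy with hx hy hy
    · exact hne (hx.trans hy.symm)
    · exact hc _ _ ((viAdj_inl_topInc _).2 (Or.inl rfl)) hxy
    · exact hc _ _ ((viAdj_inl_topInc _).2 (Or.inl rfl)) hxy.symm
    · exact hc _ _ ((viAdj_topInc_topInc _ _).2 ⟨fun h => hne h.2, Or.inl rfl⟩) hxy
  have notMem_range_star {w : V} (hw : w ≠ v) :
      c (Sum.inr (topInc w v hw)) ∉ Set.range star := by
    rintro ⟨x, hx⟩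
    simp only [star] at hx
    split_ifs at hx
    · exact hc _ _ ((viAdj_inl_topInc hw).2 (Or.inr rfl)) hx
    · exact hc _ _ ((viAdj_topInc_topInc _ _).2 ⟨fun h => hw h.1, Or.inr (Or.inl rfl)⟩) hx.symm
  exact star_injective.eq_of_notMem_range (by simpa using hk) (notMem_range_star h)
    (notMem_range_star h')

theorem IsVIColoring.card_add_two_le [Nontrivial V] (hc : IsVIColoring ⊤ c) :
    Fintype.card V + 2 ≤ k := by
  by_contra! hk
  replace hk : k ≤ Fintype.card V + 1 := by omega
  choose w hw using fun v : V => exists_ne v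
  let f : V → Fin k := fun v => c (Sum.inr (topInc (w v) v (hw v)))
  have color_topInc {u v : V} (h : u ≠ v) : c (Sum.inr (topInc u v h)) = f v :=
    hc.color_topInc_eq hk h (hw v)
  have f_injective : Injective f := by
    intro u v huv
    by_contra hne
    have hadj := (viAdj_topInc_topInc hne (Ne.symm hne)).2 ⟨fun h => hne h.1, Or.inr (Or.inl rfl)⟩
    exact hc _ _ hadj
      ((color_topInc hne).trans (huv.symm.trans (color_topInc (Ne.symm hne)).symm))
  have notMem_range_f (x : V) : c (Sum.inl x) ∉ Set.range f := by
    rintro ⟨y, hy⟩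
    by_cases hxy : x = y
    · subst hxy
      exact hc _ _ ((viAdj_inl_topInc (hw x)).2 (Or.inr rfl)) hy.symm
    · rw [← color_topInc hxy] at hy
      exact hc _ _ ((viAdj_inl_topInc hxy).2 (Or.inl rfl)) hy.symm
  obtain ⟨a, b, hab⟩ := exists_pair_ne V
  exact hc (Sum.inl a) (Sum.inl b) hab
    (f_injective.eq_of_notMem_range (by simpa using hk) (notMem_range_f a) (notMem_range_f b))

end LowerBound

section UpperBound

variable {n : ℕ}

def vertexColor (v : Fin n) : Fin (n + 2) :=
  if (v : ℕ) = 0 then ⟨n, by omega⟩ else ⟨v - 1, by omega⟩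

def incColor (u v : Fin n) : Fin (n + 2) :=
  if (u : ℕ) = v + 1 then (if (v : ℕ) % 2 = 0 then ⟨n + 1, by omega⟩ else ⟨n, by omega⟩)
  else ⟨v, by omega⟩

lemma vertexColor_injective : Injective (vertexColor (n := n)) := by
  intro u v
  unfold vertexColor
  split_ifs <;> simp only [Fin.ext_iff] <;> omega

lemma vertexColor_ne_incColor {w u v : Fin n} (hw : w = u ∨ w = v) :
    vertexColor w ≠ incColor u v := by
  simp only [Fin.ext_iff] at hw
  unfold vertexColor incColor
  split_ifs <;> simp only [ne_eq, Fin.mk.injEq] <;> omega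

lemma incColor_ne_incColor {u v w x : Fin n} (h : u ≠ v) (h' : w ≠ x)
    (hadj : ¬(u = w ∧ v = x) ∧ (u = w ∨ v = w ∨ u = x)) :
    incColor u v ≠ incColor w x := by
  simp only [← Fin.val_ne_iff, Fin.ext_iff] at h h' hadj
  unfold incColor
  split_ifs <;> simp only [ne_eq, Fin.mk.injEq] <;> omega

noncomputable def completeGraphVIColoring (n : ℕ) :
    VIElem (⊤ : SimpleGraph (Fin n)) → Fin (n + 2) :=
  Sum.elim vertexColor fun i => incColor i.1.1 (Sym2.Mem.other i.2.2)

lemma isVIColoring_completeGraphVIColoring : IsVIColoring ⊤ (completeGraphVIColoring n) := by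
  rintro (w | i) (x | j) hadj
  · exact vertexColor_injective.ne hadj
  · obtain ⟨u, v, h, rfl⟩ := j.exists_eq_topInc
    simp only [completeGraphVIColoring, Sum.elim_inl, Sum.elim_inr, other_topInc]
    exact vertexColor_ne_incColor ((viAdj_inl_topInc h).1 hadj)
  · obtain ⟨u, v, h, rfl⟩ := i.exists_eq_topInc
    simp only [completeGraphVIColoring, Sum.elim_inl, Sum.elim_inr, other_topInc]
    exact (vertexColor_ne_incColor ((viAdj_inl_topInc h).1 hadj)).symm
  · obtain ⟨u, v, h, rfl⟩ := i.exists_eq_topInc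
    obtain ⟨w, x, h', rfl⟩ := j.exists_eq_topInc
    simp only [completeGraphVIColoring, Sum.elim_inr, other_topInc]
    exact incColor_ne_incColor h h' ((viAdj_topInc_topInc h h').1 hadj)

end UpperBound

/-- For every integer `n ≥ 2`, the complete graph `K_n` satisfies
`χ_vi(K_n) = n + 2`. -/
theorem chiVI_completeGraph (n : ℕ) (hn : 2 ≤ n) :
    chiVI (⊤ : SimpleGraph (Fin n)) = n + 2 := by
  have : Nontrivial (Fin n) := Fin.nontrivial_iff_two_le.2 hn
  have hmem : n + 2 ∈ {k | ∃ c : VIElem (⊤ : SimpleGraph (Fin n)) → Fin k, IsVIColoring ⊤ c} :=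
    ⟨completeGraphVIColoring n, isVIColoring_completeGraphVIColoring⟩
  refine le_antisymm (Nat.sInf_le hmem) (le_csInf ⟨_, hmem⟩ ?_)
  rintro k ⟨c, hc⟩
  simpa using hc.card_add_two_le
end

section
/- Let G be a k-regular bipartite finite simple graph with k ≥ 4 whose two parts each have n vertices. Then χ_vi(G) ≤ min{n+3, 2k}. -/
open SimpleGraph

variable {V : Type*}

/-!
Both bounds come from explicit colorings. An incidence `(v, vw)` is determined by the arc
`(v, w)`, so a vi-coloring is a pair of maps `V → C` and `V → V → C` subject to local
constraints.

For `n + 3`, index each part injectively by `ZMod n` and color everything from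
`ZMod n ⊕ Fin 3` by a fixed pattern on the complete bipartite graph.

For `2k`, incidences at `A` take colors from one palette of size `k`, injectively around each
vertex, and incidences at `B` from a second palette. A vertex `b ∈ B` sees all `k` colors of the
second palette, so it needs a color of the first palette missing from the `k` incidences
`(a, ab)`: it suffices that two of them agree. Two disjoint perfect matchings `μ₁, μ₂` (Hall's
theorem, applied to the regular graph and to the regular graph minus `μ₁`) supply the two
neighbors `μ₁⁻¹ b, μ₂⁻¹ b`, both asked to color their incidence at `b` with `c b`. At `a` this
is compatible with injectivity iff `c (μ₁ a) ≠ c (μ₂ a)`: `c` must properly color the functional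
graph of the fixed-point-free permutation `μ₂ ∘ μ₁⁻¹`, whose degrees are at most two.
-/

theorem chiVI_le_card_of_arcColoring {G : SimpleGraph V} {C : Type*} [Fintype C]
    (cV : V → C) (cI : V → V → C)
    (h_adj : ∀ v w, G.Adj v w → cV v ≠ cV w)
    (h_inc : ∀ v w, G.Adj v w → cV v ≠ cI v w ∧ cV w ≠ cI v w)
    (h_star : ∀ v w w', G.Adj v w → G.Adj v w' → w ≠ w' → cI v w ≠ cI v w')
    (h_path : ∀ u v w, G.Adj u v → G.Adj v w → cI u v ≠ cI v w) :
    chiVI G ≤ Fintype.card C := by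
  let other (i : Inc G) : V := Sym2.Mem.other i.2.2
  have edge_eq (i : Inc G) : i.1.2 = s(i.1.1, other i) := (Sym2.other_spec i.2.2).symm
  have adj_other (i : Inc G) : G.Adj i.1.1 (other i) := by
    rw [← mem_edgeSet, ← edge_eq]; exact i.2.1
  have h_vert_inc (u : V) (i : Inc G) (hu : u ∈ i.1.2) : cV u ≠ cI i.1.1 (other i) := by
    rw [edge_eq, Sym2.mem_iff] at hu
    rcases hu with rfl | rfl
    exacts [(h_inc _ _ (adj_other i)).1, (h_inc _ _ (adj_other i)).2]
  let c : VIElem G → C := Sum.elim cV fun i => cI i.1.1 (other i)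
  refine Nat.sInf_le ⟨Fintype.equivFin C ∘ c, fun a b hab hc => ?_⟩
  replace hc : c a = c b := (Fintype.equivFin C).injective hc
  rcases a with u | i <;> rcases b with w | j
  · exact h_adj u w hab hc
  · exact h_vert_inc u j hab hc
  · exact h_vert_inc w i hab hc.symm
  change cI i.1.1 (other i) = cI j.1.1 (other j) at hc
  obtain ⟨hij, hv | he | hs | hs⟩ := hab
  · have hx : other i ≠ other j := fun hx =>
      hij (Subtype.ext (Prod.ext hv (by rw [edge_eq i, edge_eq j, hv, hx])))
    have hj := adj_other j
    rw [← hv] at hj hc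
    exact h_star _ _ _ (adj_other i) hj hx hc
  · have hv : i.1.1 ≠ j.1.1 := fun hv => hij (Subtype.ext (Prod.ext hv he))
    rw [edge_eq i, edge_eq j, Sym2.eq_iff] at he
    obtain ⟨hw, hx⟩ := he.resolve_left (fun h => hv h.1)
    rw [← hw, ← hx] at hc
    exact h_path _ _ _ (adj_other i) (adj_other i).symm hc
  · have hw : j.1.1 = other i := Sym2.congr_right.mp (hs.trans (edge_eq i))
    have hj := adj_other j
    rw [hw] at hj hc
    exact h_path _ _ _ (adj_other i) hj hc
  · have hv : i.1.1 = other j := by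
      rw [edge_eq j, Sym2.eq_swap] at hs
      exact Sym2.congr_right.mp hs
    have hi := adj_other i
    rw [hv] at hi hc
    exact h_path _ _ _ (adj_other j) hi hc.symm

theorem chiVI_le_card_of_isBipartiteWith {G : SimpleGraph V} {A B : Set V}
    (hG : G.IsBipartiteWith A B) {C : Type*} [Fintype C]
    (vertA vertB : V → C) (incA incB : V → V → C)
    (h_vert : ∀ a b, a ∈ A → G.Adj a b → vertA a ≠ vertB b)
    (h_incA : ∀ a b, a ∈ A → G.Adj a b → vertA a ≠ incA a b ∧ vertB b ≠ incA a b)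
    (h_incB : ∀ a b, a ∈ A → G.Adj a b → vertA a ≠ incB b a ∧ vertB b ≠ incB b a)
    (h_starA : ∀ a b b', a ∈ A → G.Adj a b → G.Adj a b' → b ≠ b' → incA a b ≠ incA a b')
    (h_starB : ∀ b a a', b ∈ B → G.Adj b a → G.Adj b a' → a ≠ a' → incB b a ≠ incB b a')
    (h_pathA : ∀ a b a', a ∈ A → G.Adj a b → G.Adj b a' → incA a b ≠ incB b a')
    (h_pathB : ∀ b a b', b ∈ B → G.Adj b a → G.Adj a b' → incB b a ≠ incA a b') :
    chiVI G ≤ Fintype.card C := by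
  classical
  have hBA : ∀ {v}, v ∈ B → v ∉ A := fun hv => Set.disjoint_right.mp hG.disjoint hv
  refine chiVI_le_card_of_arcColoring (fun v => if v ∈ A then vertA v else vertB v)
    (fun v w => if v ∈ A then incA v w else incB v w) (fun v w h => ?_) (fun v w h => ?_)
    (fun v w w' h h' hne => ?_) (fun u v w huv hvw => ?_)
  · rcases hG.mem_of_adj h with ⟨hv, hw⟩ | ⟨hv, hw⟩
    · simpa [hv, hBA hw] using h_vert v w hv h
    · simpa [hw, hBA hv] using (h_vert w v hw h.symm).symm
  · rcases hG.mem_of_adj h with ⟨hv, hw⟩ | ⟨hv, hw⟩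
    · simpa [hv, hBA hw] using h_incA v w hv h
    · simpa [hw, hBA hv] using (h_incB w v hw h.symm).symm
  · by_cases hv : v ∈ A
    · simpa [hv] using h_starA v w w' hv h h' hne
    · have hvB : v ∈ B := ((hG.mem_of_adj h).resolve_left fun h => hv h.1).1
      simpa [hv] using h_starB v w w' hvB h h' hne
  · rcases hG.mem_of_adj huv with ⟨hu, hv⟩ | ⟨hu, hv⟩
    · simpa [hu, hBA hv] using h_pathA u v w hu huv hvw
    · simpa [hv, hBA hu] using h_pathB u v w hu huv hvw

/- A vi-coloring of the complete bipartite graph on two copies of `ι`. The incidence `(i, ij)`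
at the `A`-end gets the color `j`, except on the diagonal; the incidence `(j, ij)` at the `B`-end
gets the color `i`, except at two places per `j`, which frees the color `vertB j` for `j` itself.
The vertices of `A` use two of the three extra colors. -/
namespace VIPattern

variable {ι : Type*} [DecidableEq ι]

def vertA [Zero ι] (i : ι) : ι ⊕ Fin 3 := .inr (if i = 0 then 0 else 1)

def vertB [Zero ι] [One ι] (j : ι) : ι ⊕ Fin 3 := .inl (if j = 0 then 1 else 0)

def incA (i j : ι) : ι ⊕ Fin 3 := if j = i then .inr 2 else .inl j

def incB [Zero ι] [One ι] (i j : ι) : ι ⊕ Fin 3 :=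
  if i = j then .inr (if j = 0 then 1 else 0)
  else if i = (if j = 0 then 1 else 0) then .inr (if j = 0 then 0 else 1)
  else .inl i

theorem vertA_ne_incA [Zero ι] (i j : ι) : vertA i ≠ incA i j := by
  unfold vertA incA; split_ifs <;> simp

theorem incA_injective (i : ι) : Function.Injective (incA i) := by
  intro j j' h
  unfold incA at h; split_ifs at h <;> simp_all

section

variable [Zero ι] [One ι]

theorem vertA_ne_vertB (i j : ι) : vertA i ≠ vertB j := by
  simp [vertA, vertB]

theorem vertB_ne_incA [NeZero (1 : ι)] (i j : ι) : vertB j ≠ incA i j := by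
  have := NeZero.ne (1 : ι)
  unfold vertB incA; split_ifs <;> grind

theorem vertA_ne_incB (i j : ι) : vertA i ≠ incB i j := by
  unfold vertA incB; split_ifs <;> grind

theorem vertB_ne_incB (i j : ι) : vertB j ≠ incB i j := by
  unfold vertB incB; split_ifs <;> grind

theorem incB_injective (j : ι) : Function.Injective (incB · j) := by
  intro i i' h
  unfold incB at h; split_ifs at h <;> grind

theorem incA_ne_incB_left (i j j' : ι) : incA i j ≠ incB i j' := by
  unfold incA incB; split_ifs <;> grind

theorem incA_ne_incB_right (i i' j : ι) : incA i j ≠ incB i' j := by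
  unfold incA incB; split_ifs <;> grind

end

end VIPattern

theorem Set.exists_injOn_of_ncard_le {α β : Type*} [Finite α] [Fintype β] [Nonempty β]
    {s : Set α} (hs : s.ncard ≤ Fintype.card β) : ∃ f : α → β, InjOn f s := by
  obtain ⟨f, -, hf⟩ := s.toFinite.exists_injOn_of_encard_le (t := (univ : Set β))
    (by rw [← s.toFinite.cast_ncard_eq, encard_univ, ENat.card_eq_coe_fintype_card]
        exact_mod_cast hs)
  exact ⟨f, hf⟩

theorem chiVI_le_add_three [Finite V] {G : SimpleGraph V} {A B : Set V}
    (hG : G.IsBipartiteWith A B) {n : ℕ} (hn : 2 ≤ n) (hA : A.ncard ≤ n) (hB : B.ncard ≤ n) :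
    chiVI G ≤ n + 3 := by
  have : Fact (1 < n) := ⟨hn⟩
  obtain ⟨ia, hia⟩ := Set.exists_injOn_of_ncard_le (β := ZMod n) (s := A) (by rwa [ZMod.card])
  obtain ⟨ib, hib⟩ := Set.exists_injOn_of_ncard_le (β := ZMod n) (s := B) (by rwa [ZMod.card])
  have hcard : Fintype.card (ZMod n ⊕ Fin 3) = n + 3 := by simp [ZMod.card]
  rw [← hcard]
  open VIPattern in
  exact chiVI_le_card_of_isBipartiteWith hG (fun a => vertA (ia a)) (fun b => vertB (ib b))
    (fun a b => incA (ia a) (ib b)) (fun b a => incB (ia a) (ib b))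
    (fun _ _ _ _ => vertA_ne_vertB _ _)
    (fun _ _ _ _ => ⟨vertA_ne_incA _ _, vertB_ne_incA _ _⟩)
    (fun _ _ _ _ => ⟨vertA_ne_incB _ _, vertB_ne_incB _ _⟩)
    (fun _ _ _ ha hb hb' hne => (incA_injective _).ne
      (hib.ne (hG.mem_of_mem_adj ha hb) (hG.mem_of_mem_adj ha hb') hne))
    (fun _ _ _ hb ha ha' hne => (incB_injective _).ne
      (hia.ne (hG.mem_of_mem_adj' hb ha.symm) (hG.mem_of_mem_adj' hb ha'.symm) hne))
    (fun _ _ _ _ _ _ => incA_ne_incB_right _ _ _)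
    (fun _ _ _ _ _ _ => (incA_ne_incB_left _ _ _).symm)

theorem SimpleGraph.colorable_of_forall_degree_lt {G : SimpleGraph V} [Fintype V]
    [DecidableRel G.Adj] {m : ℕ} (h : ∀ v, G.degree v < m) : G.Colorable m := by
  classical
  suffices ∀ s : Finset V, ∃ c : V → Fin m, ∀ v ∈ s, ∀ w ∈ s, G.Adj v w → c v ≠ c w by
    obtain ⟨c, hc⟩ := this Finset.univ
    exact ⟨Coloring.mk c fun hvw => hc _ (Finset.mem_univ _) _ (Finset.mem_univ _) hvw⟩
  intro s
  induction s using Finset.induction_on with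
  | empty => exact ⟨fun v => ⟨0, by have := h v; omega⟩, by simp⟩
  | insert a s ha ih =>
    obtain ⟨c, hc⟩ := ih
    have hlt : ((G.neighborFinset a).image c).card < (Finset.univ : Finset (Fin m)).card := by
      simpa using Finset.card_image_le.trans_lt (h a)
    obtain ⟨x, -, hx⟩ := Finset.exists_mem_notMem_of_card_lt_card hlt
    have hx' : ∀ w, G.Adj a w → c w ≠ x := fun w hw hcw =>
      hx (Finset.mem_image.mpr ⟨w, (G.mem_neighborFinset a w).mpr hw, hcw⟩)
    refine ⟨Function.update c a x, fun v hv w hw hvw => ?_⟩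
    rcases Finset.mem_insert.mp hv with rfl | hv <;> rcases Finset.mem_insert.mp hw with rfl | hw
    · exact absurd hvw (G.irrefl)
    · simpa [hvw.ne'] using (hx' w hvw).symm
    · simpa [hvw.ne] using hx' v hvw.symm
    · rw [Function.update_of_ne (ne_of_mem_of_not_mem hv ha),
        Function.update_of_ne (ne_of_mem_of_not_mem hw ha)]
      exact hc v hv w hw hvw

theorem Equiv.Perm.exists_fin_coloring {α : Type*} [Finite α] (π : Equiv.Perm α)
    (hπ : ∀ a, π a ≠ a) {m : ℕ} (hm : 3 ≤ m) : ∃ c : α → Fin m, ∀ a, c (π a) ≠ c a := by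
  classical
  have := Fintype.ofFinite α
  let H := SimpleGraph.fromRel fun a b => π a = b
  have hdeg : ∀ a, H.degree a < m := by
    intro a
    have : H.neighborFinset a ⊆ {π a, π.symm a} := by
      intro b hb
      simp only [SimpleGraph.mem_neighborFinset, H, SimpleGraph.fromRel_adj] at hb
      rcases hb.2 with rfl | rfl <;> simp
    have := (Finset.card_le_card this).trans Finset.card_le_two
    rw [SimpleGraph.card_neighborFinset_eq_degree] at this
    omega
  obtain ⟨C⟩ := SimpleGraph.colorable_of_forall_degree_lt hdeg
  exact ⟨C, fun a => C.valid (by simp [H, hπ a])⟩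

theorem SimpleGraph.ncard_le_ncard_iUnion_neighborSet_of_regular [Finite V]
    {G : SimpleGraph V} {k : ℕ} (hk : 0 < k) (hreg : ∀ v, (G.neighborSet v).ncard = k)
    (s : Set V) : s.ncard ≤ (⋃ x ∈ s, G.neighborSet x).ncard := by
  classical
  have := Fintype.ofFinite V
  set t := ⋃ x ∈ s, G.neighborSet x
  have hcount : s.toFinset.card * k ≤ t.toFinset.card * k := by
    refine Finset.card_mul_le_card_mul G.Adj (fun a ha => ?_) (fun b _ => ?_)
    · rw [← hreg a, Set.ncard_eq_toFinset_card']
      refine Finset.card_le_card fun w hw => ?_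
      simp only [Finset.mem_bipartiteAbove, Set.mem_toFinset, mem_neighborSet] at hw ⊢
      exact ⟨Set.mem_biUnion (Set.mem_toFinset.mp ha) hw, hw⟩
    · rw [← hreg b, Set.ncard_eq_toFinset_card']
      refine Finset.card_le_card fun w hw => ?_
      simp only [Finset.mem_bipartiteBelow, Set.mem_toFinset, mem_neighborSet] at hw ⊢
      exact hw.2.symm
  rw [Set.ncard_eq_toFinset_card', Set.ncard_eq_toFinset_card']
  exact Nat.le_of_mul_le_mul_right hcount hk

theorem SimpleGraph.IsBipartiteWith.exists_equiv_adj_of_regular [Finite V] {G : SimpleGraph V}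
    {S T : Set V} (hG : G.IsBipartiteWith S T) {k : ℕ} (hk : 0 < k)
    (hreg : ∀ v, (G.neighborSet v).ncard = k) : ∃ μ : S ≃ T, ∀ a : S, G.Adj a (μ a) := by
  classical
  have := Fintype.ofFinite V
  obtain ⟨f, hf, hadj⟩ := exists_bijective_of_forall_ncard_le hG
    (ncard_le_ncard_iUnion_neighborSet_of_regular hk hreg)
  exact ⟨Equiv.ofBijective f hf, hadj⟩

theorem SimpleGraph.IsBipartiteWith.exists_two_equiv_adj_of_regular [Finite V]
    {G : SimpleGraph V} {S T : Set V} (hG : G.IsBipartiteWith S T) {k : ℕ} (hk : 2 ≤ k)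
    (hreg : ∀ v, (G.neighborSet v).ncard = k) :
    ∃ μ₁ μ₂ : S ≃ T, (∀ a : S, G.Adj a (μ₁ a)) ∧ (∀ a : S, G.Adj a (μ₂ a)) ∧
      ∀ a, μ₁ a ≠ μ₂ a := by
  obtain ⟨μ₁, h₁⟩ := hG.exists_equiv_adj_of_regular (by omega) hreg
  let G₂ := G.deleteEdges (Set.range fun a : S => s((a : V), (μ₁ a : V)))
  have hG₂ : G₂.IsBipartiteWith S T := ⟨hG.disjoint, fun v w h => hG.mem_of_adj h.1⟩
  have hST : ∀ {v}, v ∈ S → v ∉ T := fun hv => Set.disjoint_left.mp hG.disjoint hv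
  have partner (v : V) : ∃ p, G.Adj v p ∧ ∀ w, G.Adj v w →
      ((s(v, w) ∈ Set.range fun a : S => s((a : V), (μ₁ a : V))) ↔ w = p) := by
    obtain ⟨w₀, hw₀⟩ := Set.nonempty_of_ncard_ne_zero (s := G.neighborSet v) (by rw [hreg]; omega)
    rcases hG.mem_of_adj hw₀ with ⟨hv, -⟩ | ⟨hv, -⟩
    · refine ⟨μ₁ ⟨v, hv⟩, h₁ ⟨v, hv⟩, fun w hw => ⟨?_, ?_⟩⟩
      · rintro ⟨a, ha⟩
        rcases Sym2.eq_iff.mp ha with ⟨rfl, rfl⟩ | ⟨rfl, rfl⟩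
        · rfl
        · exact absurd (μ₁ a).2 (hST hv)
      · rintro rfl
        exact ⟨⟨v, hv⟩, rfl⟩
    · refine ⟨μ₁.symm ⟨v, hv⟩, by simpa using (h₁ (μ₁.symm ⟨v, hv⟩)).symm, fun w hw => ⟨?_, ?_⟩⟩
      · rintro ⟨a, ha⟩
        rcases Sym2.eq_iff.mp ha with ⟨rfl, rfl⟩ | ⟨rfl, h⟩
        · exact absurd hv (hST a.2)
        · simp [← h]
      · rintro rfl
        exact ⟨μ₁.symm ⟨v, hv⟩, by simp [Sym2.eq_swap]⟩
  have hreg₂ (v : V) : (G₂.neighborSet v).ncard = k - 1 := by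
    obtain ⟨p, hp, hrange⟩ := partner v
    have : G₂.neighborSet v = G.neighborSet v \ {p} := by
      ext w
      simp only [mem_neighborSet, deleteEdges_adj, Set.mem_sdiff, Set.mem_singleton_iff, G₂]
      exact and_congr_right fun hw => not_congr (hrange w hw)
    rw [this, Set.ncard_sdiff_singleton_of_mem (s := G.neighborSet v) hp, hreg]
  obtain ⟨μ₂, h₂⟩ := hG₂.exists_equiv_adj_of_regular (by omega) hreg₂
  exact ⟨μ₁, μ₂, h₁, fun a => (deleteEdges_adj.mp (h₂ a)).1,
    fun a he => (deleteEdges_adj.mp (h₂ a)).2 ⟨a, by simp [he]⟩⟩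

theorem Set.InjOn.exists_injOn_eqOn {α β : Type*} [Finite α] [Fintype β] {s t : Set α}
    {f : α → β} (hf : InjOn f t) (hts : t ⊆ s) (hs : s.ncard = Fintype.card β) :
    ∃ g : α → β, InjOn g s ∧ EqOn g f t := by
  classical
  have := Fintype.ofFinite s
  obtain ⟨e, he⟩ := Set.MapsTo.exists_equiv_extend_of_card_eq (t := Finset.univ)
    (s := {x : s | (x : α) ∈ t}) (f := f ∘ Subtype.val)
    (by rw [Finset.card_univ, ← hs, ← Nat.card_coe_set_eq, Nat.card_eq_fintype_card])
    (fun _ _ => Finset.mem_coe.mpr (Finset.mem_univ _))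
    (fun x hx y hy h => Subtype.ext (hf hx hy h))
  refine ⟨fun a => if h : a ∈ s then e ⟨a, h⟩ else f a, fun x hx y hy hxy => ?_, fun x hx => ?_⟩
  · simp only [dif_pos hx, dif_pos hy] at hxy
    exact congrArg Subtype.val (e.injective (Subtype.ext hxy))
  · simp only [dif_pos (hts hx)]
    exact he ⟨x, hts hx⟩ hx

theorem Set.exists_forall_ne_of_not_injOn {α β : Type*} [Fintype β] {s : Set α} {f : α → β}
    (hfin : s.Finite) (hs : s.ncard ≤ Fintype.card β) (hf : ¬ InjOn f s) :
    ∃ b, ∀ a ∈ s, f a ≠ b := by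
  have hlt : (f '' s).ncard < (univ : Set β).ncard := by
    rw [ncard_univ, Nat.card_eq_fintype_card]
    exact ((ncard_image_le hfin).lt_of_ne fun h => hf (injOn_of_ncard_image_eq h hfin)).trans_le hs
  obtain ⟨b, -, hb⟩ := exists_mem_notMem_of_ncard_lt_ncard hlt
  exact ⟨b, fun a ha hab => hb ⟨a, ha, hab⟩⟩

theorem SimpleGraph.IsBipartiteWith.exists_forall_ne_of_exists_eq [Finite V]
    {G : SimpleGraph V} {S T : Set V} (hG : G.IsBipartiteWith S T) {k : ℕ} (hk : 0 < k)
    (hdeg : ∀ v, (G.neighborSet v).ncard ≤ k) (lab : V → V → Fin k)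
    (hrep : ∀ w ∈ T, ∃ v v', v ≠ v' ∧ G.Adj w v ∧ G.Adj w v' ∧ lab v w = lab v' w) :
    ∃ miss : V → Fin k, ∀ v w, v ∈ S → G.Adj v w → lab v w ≠ miss w := by
  have (w : V) : ∃ m, ∀ v, v ∈ S → G.Adj v w → lab v w ≠ m := by
    by_cases hw : w ∈ T
    · obtain ⟨v, v', hne, hv, hv', heq⟩ := hrep w hw
      obtain ⟨m, hm⟩ := Set.exists_forall_ne_of_not_injOn (f := fun v => lab v w)
        (Set.toFinite (G.neighborSet w)) (by simpa using hdeg w)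
        fun hinj => hne (hinj hv hv' heq)
      exact ⟨m, fun v _ hvw => hm v hvw.symm⟩
    · exact ⟨⟨0, hk⟩, fun v hv hvw => absurd (hG.mem_of_mem_adj hv hvw) hw⟩
  choose miss hmiss using this
  exact ⟨miss, fun v w => hmiss w v⟩

theorem SimpleGraph.IsBipartiteWith.exists_labeling_of_regular [Finite V] {G : SimpleGraph V}
    {S T : Set V} (hG : G.IsBipartiteWith S T) {k : ℕ} (hk : 3 ≤ k)
    (hreg : ∀ v, (G.neighborSet v).ncard = k) :
    ∃ (lab : V → V → Fin k) (miss : V → Fin k),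
      (∀ v ∈ S, Set.InjOn (lab v) (G.neighborSet v)) ∧
      ∀ v w, v ∈ S → G.Adj v w → lab v w ≠ miss w := by
  classical
  obtain ⟨μ₁, μ₂, h₁, h₂, hne⟩ := hG.exists_two_equiv_adj_of_regular (by omega) hreg
  obtain ⟨c, hc⟩ := Equiv.Perm.exists_fin_coloring (μ₁.symm.trans μ₂)
    (fun b h => hne (μ₁.symm b) (by simpa using h.symm)) hk
  let cV : V → Fin k := fun w => if h : w ∈ T then c ⟨w, h⟩ else ⟨0, by omega⟩
  have hcV (b : T) : cV b = c b := by simp [cV]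
  have hext (a : S) : ∃ g : V → Fin k, Set.InjOn g (G.neighborSet a) ∧
      g (μ₁ a) = c (μ₁ a) ∧ g (μ₂ a) = c (μ₂ a) := by
    have hpair : Set.InjOn cV {(μ₁ a : V), (μ₂ a : V)} := by
      refine Set.injOn_pair.mpr fun h => absurd ?_ (hc (μ₁ a))
      simpa [hcV] using h.symm
    obtain ⟨g, hg, hgc⟩ := hpair.exists_injOn_eqOn (s := G.neighborSet a)
      (Set.insert_subset (h₁ a) (Set.singleton_subset_iff.mpr (h₂ a))) (by simp [hreg])
    exact ⟨g, hg, by simpa [hcV] using hgc (Set.mem_insert _ _),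
      by simpa [hcV] using hgc (Set.mem_insert_of_mem _ rfl)⟩
  choose labS hinj hlab₁ hlab₂ using hext
  let lab : V → V → Fin k := fun v => if h : v ∈ S then labS ⟨v, h⟩ else cV
  have hlab (a : S) : lab a = labS a := by simp [lab]
  obtain ⟨miss, hmiss⟩ := hG.exists_forall_ne_of_exists_eq (by omega) (fun v => (hreg v).le) lab
    fun w hw => by
      let b : T := ⟨w, hw⟩
      refine ⟨μ₁.symm b, μ₂.symm b, fun h => hne (μ₁.symm b) ?_,
        by simpa using (h₁ (μ₁.symm b)).symm, by simpa using (h₂ (μ₂.symm b)).symm, ?_⟩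
      · rw [Equiv.apply_symm_apply, Subtype.ext h, Equiv.apply_symm_apply]
      · have e₁ := hlab₁ (μ₁.symm b)
        have e₂ := hlab₂ (μ₂.symm b)
        simp only [Equiv.apply_symm_apply] at e₁ e₂
        rw [hlab, hlab, e₁, e₂]
  exact ⟨lab, miss, fun v hv => by simpa [hlab ⟨v, hv⟩] using hinj ⟨v, hv⟩, hmiss⟩

theorem chiVI_le_two_mul [Finite V] {G : SimpleGraph V} {A B : Set V}
    (hG : G.IsBipartiteWith A B) {k : ℕ} (hk : 3 ≤ k)
    (hreg : ∀ v, (G.neighborSet v).ncard = k) : chiVI G ≤ 2 * k := by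
  obtain ⟨labA, missA, hinjA, hmissA⟩ := hG.exists_labeling_of_regular hk hreg
  obtain ⟨labB, missB, hinjB, hmissB⟩ := hG.symm.exists_labeling_of_regular hk hreg
  have hcard : Fintype.card (Fin k ⊕ Fin k) = 2 * k := by simp [two_mul]
  rw [← hcard]
  refine chiVI_le_card_of_isBipartiteWith hG (fun a => .inr (missB a)) (fun b => .inl (missA b))
    (fun a b => .inl (labA a b)) (fun b a => .inr (labB b a)) (by simp)
    (fun a b ha h => ⟨by simp, by simpa using (hmissA a b ha h).symm⟩)
    (fun a b ha h => ⟨by simpa using (hmissB b a (hG.mem_of_mem_adj ha h) h.symm).symm, by simp⟩)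
    (fun a b b' ha hb hb' hne => by simpa using (hinjA a ha).ne hb hb' hne)
    (fun b a a' hb ha ha' hne => by simpa using (hinjB b hb).ne ha ha' hne) (by simp) (by simp)

theorem chiVI_regular_bipartite_general {V : Type*} [Fintype V]
    (G : SimpleGraph V) (A B : Set V) (n k : ℕ) (hk : 4 ≤ k)
    (hdisj : Disjoint A B)
    (hbip : ∀ x y : V, G.Adj x y → (x ∈ A ∧ y ∈ B) ∨ (x ∈ B ∧ y ∈ A))
    (hA : A.ncard = n) (hB : B.ncard = n)
    (hreg : ∀ v : V, (G.neighborSet v).ncard = k) :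
    chiVI G ≤ min (n + 3) (2 * k) := by
  have hG : G.IsBipartiteWith A B := ⟨hdisj, hbip⟩
  rcases isEmpty_or_nonempty V with hV | ⟨⟨v⟩⟩
  · have : chiVI G ≤ 0 := Nat.sInf_le ⟨isEmptyElim, fun a => isEmptyElim a⟩
    omega
  have hkn : k ≤ n := by
    obtain ⟨w, hw⟩ := Set.nonempty_of_ncard_ne_zero (s := G.neighborSet v) (by rw [hreg]; omega)
    rcases hG.mem_of_adj hw with ⟨hv, -⟩ | ⟨hv, -⟩
    · rw [← hreg v, ← hB]
      exact Set.ncard_le_ncard (isBipartiteWith_neighborSet_subset hG hv)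
    · rw [← hreg v, ← hA]
      exact Set.ncard_le_ncard (isBipartiteWith_neighborSet_subset hG.symm hv)
  exact le_min (chiVI_le_add_three hG (by omega) hA.le hB.le) (chiVI_le_two_mul hG (by omega) hreg)

/-- Let `G` be a `k`-regular bipartite finite simple graph with `k ≥ 4`
whose two parts `A` and `B` each have `n` vertices. Then `χ_vi(G) ≤ min {n+3, 2k}`. -/
theorem chiVI_regular_bipartite {V : Type*} [Fintype V] [DecidableEq V]
    (G : SimpleGraph V) (A B : Set V) (n k : ℕ) (hk : 4 ≤ k)
    (hdisj : Disjoint A B) (hcover : A ∪ B = Set.univ)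
    (hbip : ∀ x y : V, G.Adj x y → (x ∈ A ∧ y ∈ B) ∨ (x ∈ B ∧ y ∈ A))
    (hA : A.ncard = n) (hB : B.ncard = n)
    (hreg : ∀ v : V, (G.neighborSet v).ncard = k) :
    chiVI G ≤ min (n + 3) (2 * k) :=
  chiVI_regular_bipartite_general G A B n k hk hdisj hbip hA hB hreg
end

section
/- Let G be a bipartite finite simple graph with maximum degree Δ ≥ 4. Then χ_vi(G) ≤ 2Δ. -/
open SimpleGraph

variable {V : Type*}

/-!
Fix a proper 2-colouring `C` of `G` and write `Δ = maxDeg G`. Colour a vertex `x` by `(C x, M x)`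
and an incidence `(u, uv)` by `(C v, ε u v)` in `Fin 2 × Fin Δ`. Since every pair of adjacent
incidences with different first vertices has adjacent first vertices, this is proper as soon as
`ε u` is injective on the neighbours of `u` and `ε u v ≠ M v`. By Hall's theorem such an `ε u`
exists unless `u` has degree `Δ` and `M` is constant on its neighbourhood. To rule this out, pick
(again by Hall) distinct neighbours `r u` of the vertices `u` of degree `Δ` and second neighbours
`s u ≠ r u`; the graph of the partial map `r u ↦ s u` is 2-degenerate, hence 3-colourable, and
such a colouring makes `M` nonconstant on all full neighbourhoods.
-/

open Finset

theorem Fin.exists_injective_forall_ne {ι : Type*} [Fintype ι] {n : ℕ} (m : ι → Fin n)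
    (hcard : Fintype.card ι ≤ n) (hm : Fintype.card ι = n → ∃ i j, m i ≠ m j) :
    ∃ g : ι → Fin n, Function.Injective g ∧ ∀ i, g i ≠ m i := by
  classical
  have hall : ∀ s : Finset ι, #s ≤ #(s.biUnion fun i => univ.erase (m i)) := by
    intro s
    obtain rfl | ⟨i₀, hi₀⟩ := s.eq_empty_or_nonempty
    · simp
    by_cases hconst : ∃ i₁ ∈ s, m i₁ ≠ m i₀
    · obtain ⟨i₁, hi₁, hne⟩ := hconst
      have hu : s.biUnion (fun i => univ.erase (m i)) = univ := eq_univ_of_forall fun c => by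
        rcases eq_or_ne c (m i₀) with rfl | hc
        · exact mem_biUnion.2 ⟨i₁, hi₁, mem_erase.2 ⟨hne.symm, mem_univ _⟩⟩
        · exact mem_biUnion.2 ⟨i₀, hi₀, mem_erase.2 ⟨hc, mem_univ _⟩⟩
      rw [hu, card_univ, Fintype.card_fin]
      exact (card_le_univ s).trans hcard
    · have hsn : #s ≠ n := by
        intro hsn
        have hι : Fintype.card ι = n := le_antisymm hcard (hsn ▸ card_le_univ s)
        obtain ⟨i, j, hij⟩ := hm hι
        have hsu : s = univ := eq_univ_of_card s (hsn.trans hι.symm)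
        have hconst : ∀ i ∈ s, m i = m i₀ := by simpa using hconst
        exact hij ((hconst i (hsu ▸ mem_univ i)).trans (hconst j (hsu ▸ mem_univ j)).symm)
      calc #s ≤ n - 1 := by have := (card_le_univ s).trans hcard; omega
        _ = #(univ.erase (m i₀)) := by simp
        _ ≤ _ := card_le_card (subset_biUnion_of_mem (fun i => univ.erase (m i)) hi₀)
  obtain ⟨g, hg, hgm⟩ := (all_card_le_biUnion_card_iff_exists_injective _).1 hall
  exact ⟨g, hg, fun i => (mem_erase.1 (hgm i)).1⟩

namespace SimpleGraph

variable {G : SimpleGraph V}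

theorem colorable_succ_of_forall_exists_card_adj_le [Fintype V] [DecidableRel G.Adj] {k : ℕ}
    (h : ∀ s : Finset V, s.Nonempty → ∃ x ∈ s, #{y ∈ s | G.Adj x y} ≤ k) :
    G.Colorable (k + 1) := by
  classical
  suffices ∀ s : Finset V, ∃ C : V → Fin (k + 1), ∀ x ∈ s, ∀ y ∈ s, G.Adj x y → C x ≠ C y by
    obtain ⟨C, hC⟩ := this univ
    exact ⟨Coloring.mk C fun hxy => hC _ (mem_univ _) _ (mem_univ _) hxy⟩
  intro s
  induction s using Finset.strongInduction with
  | H s ih =>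
  obtain rfl | hs := s.eq_empty_or_nonempty
  · exact ⟨0, by simp⟩
  obtain ⟨x, hx, hdeg⟩ := h s hs
  obtain ⟨C, hC⟩ := ih (s.erase x) (erase_ssubset hx)
  obtain ⟨c, -, hc⟩ : ∃ c ∈ univ, c ∉ {y ∈ s | G.Adj x y}.image C :=
    exists_mem_notMem_of_card_lt_card <| by
      simpa using card_image_le.trans_lt (hdeg.trans_lt k.lt_succ_self)
  have hcx : ∀ y ∈ s, G.Adj x y → c ≠ C y := fun y hy hxy hcy =>
    hc (mem_image.2 ⟨y, mem_filter.2 ⟨hy, hxy⟩, hcy.symm⟩)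
  refine ⟨Function.update C x c, fun y hy z hz hyz => ?_⟩
  rcases eq_or_ne y x with rfl | hyx
  · simpa [hyz.ne.symm] using hcx z hz hyz
  rcases eq_or_ne z x with rfl | hzx
  · simpa [hyx] using (hcx y hy hyz.symm).symm
  · simpa [hyx, hzx] using hC y (mem_erase.2 ⟨hyx, hy⟩) z (mem_erase.2 ⟨hzx, hz⟩) hyz

theorem colorable_three_fromRel_apply [Fintype V] (f : V → V) :
    (fromRel fun x y => f x = y).Colorable 3 := by
  classical
  refine colorable_succ_of_forall_exists_card_adj_le fun s hs => exists_le_of_sum_le hs ?_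
  have hnbr : ∀ x, {y ∈ s | (fromRel fun x y => f x = y).Adj x y} ⊆
      insert (f x) {y ∈ s | f y = x} := by
    intro x y hy
    simp only [mem_filter, fromRel_adj, mem_insert] at hy ⊢
    tauto
  calc ∑ x ∈ s, #{y ∈ s | (fromRel fun x y => f x = y).Adj x y}
      ≤ ∑ x ∈ s, (#{y ∈ s | f y = x} + 1) :=
        sum_le_sum fun x _ => (card_le_card (hnbr x)).trans (card_insert_le _ _)
    _ = #{y ∈ s | f y ∈ s} + #s := by
        rw [sum_add_distrib, ← sum_card_fiberwise_eq_card_filter s s f, sum_const, smul_eq_mul,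
          mul_one]
    _ ≤ ∑ x ∈ s, 2 := by
        rw [sum_const, smul_eq_mul]
        linarith [card_filter_le s fun y => f y ∈ s]

theorem exists_injective_adj_of_degree_eq [Fintype V] [DecidableRel G.Adj] {d : ℕ} (hd : 0 < d)
    (hdeg : ∀ v, G.degree v ≤ d) :
    ∃ r : {u // G.degree u = d} → V, Function.Injective r ∧ ∀ u, G.Adj u.1 (r u) := by
  classical
  -- Hall's condition, by double counting the edges between `W` and its neighbourhood
  have hall : ∀ W : Finset {u // G.degree u = d},
      #W ≤ #(W.biUnion fun u => G.neighborFinset u) := by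
    intro W
    let adj (u : {u // G.degree u = d}) (v : V) : Prop := G.Adj u v
    refine Nat.le_of_mul_le_mul_right (card_mul_le_card_mul adj ?_ ?_) hd
    · intro u hu
      refine (le_of_eq u.2.symm).trans (card_le_card fun v hv => ?_)
      exact (mem_bipartiteAbove adj).2
        ⟨mem_biUnion.2 ⟨u, hu, hv⟩, (mem_neighborFinset _ _ _).1 hv⟩
    · intro v _
      refine (card_le_card_of_injOn Subtype.val (fun u hu => ?_)
        Subtype.val_injective.injOn).trans (hdeg v)
      exact (mem_neighborFinset _ _ _).2 ((mem_bipartiteBelow adj).1 hu).2.symm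
  obtain ⟨r, hr, hadj⟩ := (all_card_le_biUnion_card_iff_exists_injective _).1 hall
  exact ⟨r, hr, fun u => (mem_neighborFinset _ _ _).1 (hadj u)⟩

theorem exists_fin_three_ne_on_neighbors_of_degree_eq [Fintype V] [DecidableRel G.Adj] {d : ℕ}
    (hd : 2 ≤ d) (hdeg : ∀ v, G.degree v ≤ d) :
    ∃ M : V → Fin 3, ∀ u, G.degree u = d → ∃ a b, G.Adj u a ∧ G.Adj u b ∧ M a ≠ M b := by
  classical
  obtain ⟨r, hr, hadj⟩ := exists_injective_adj_of_degree_eq (by omega) hdeg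
  have hsecond : ∀ u : {u // G.degree u = d}, ∃ b, G.Adj u b ∧ b ≠ r u := by
    intro u
    obtain ⟨b, hb, hne⟩ := exists_mem_ne (s := G.neighborFinset u)
      (by rw [card_neighborFinset_eq_degree, u.2]; omega) (r u)
    exact ⟨b, (mem_neighborFinset _ _ _).1 hb, hne⟩
  choose s hs using hsecond
  -- `r` is injective, so `r u ↦ s u` is (the restriction of) a self-map of `V`
  obtain ⟨C⟩ := colorable_three_fromRel_apply (Function.extend r s id)
  refine ⟨C, fun u hu => ⟨r ⟨u, hu⟩, s ⟨u, hu⟩, hadj ⟨u, hu⟩, (hs ⟨u, hu⟩).1, C.valid ?_⟩⟩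
  exact (fromRel_adj _ _ _).2 ⟨(hs ⟨u, hu⟩).2.symm, .inl (hr.extend_apply _ _ _)⟩

theorem exists_vertex_incidence_labels [Fintype V] [DecidableRel G.Adj] {d : ℕ} (hd : 3 ≤ d)
    (hdeg : ∀ v, G.degree v ≤ d) :
    ∃ (M : V → Fin d) (ε : V → V → Fin d), (∀ u v, G.Adj u v → ε u v ≠ M v) ∧
      ∀ u v w, G.Adj u v → G.Adj u w → ε u v = ε u w → v = w := by
  obtain ⟨M₃, hM₃⟩ := exists_fin_three_ne_on_neighbors_of_degree_eq (by omega) hdeg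
  let M : V → Fin d := fun v => Fin.castLE hd (M₃ v)
  have hrow (u : V) : ∃ g : G.neighborSet u → Fin d, Function.Injective g ∧ ∀ v, g v ≠ M v := by
    refine Fin.exists_injective_forall_ne (fun v : G.neighborSet u => M v)
      (by rw [card_neighborSet_eq_degree]; exact hdeg u) fun hu => ?_
    obtain ⟨a, b, ha, hb, hab⟩ := hM₃ u (by rwa [card_neighborSet_eq_degree] at hu)
    exact ⟨⟨a, ha⟩, ⟨b, hb⟩, fun h => hab (Fin.castLE_injective hd h)⟩
  choose g hgi hgM using hrow
  refine ⟨M, fun u v => if h : G.Adj u v then g u ⟨v, h⟩ else M v, fun u v huv => ?_,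
    fun u v w huv huw h => ?_⟩
  · simpa [huv] using hgM u ⟨v, huv⟩
  · simp only [huv, huw, dite_true] at h
    exact congrArg Subtype.val (hgi u h)

end SimpleGraph

namespace Inc

variable {G : SimpleGraph V} (i : Inc G)

noncomputable def other : V := Sym2.Mem.other i.2.2

theorem mk_other : s(i.1.1, i.other) = i.1.2 := Sym2.other_spec _

theorem adj_other : G.Adj i.1.1 i.other := by
  rw [← mem_edgeSet, mk_other]
  exact i.2.1

theorem mem_iff {u : V} : u ∈ i.1.2 ↔ u = i.1.1 ∨ u = i.other := by
  rw [← i.mk_other, Sym2.mem_iff]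

theorem ext_other {i j : Inc G} (h₁ : i.1.1 = j.1.1) (h₂ : i.other = j.other) : i = j :=
  Subtype.ext (Prod.ext h₁ (by rw [← i.mk_other, ← j.mk_other, h₁, h₂]))

end Inc

variable {G : SimpleGraph V}

theorem VIAdj.fst_eq_or_adj {i j : Inc G} (h : VIAdj G (.inr i) (.inr j)) :
    (i.1.1 = j.1.1 ∧ i.other ≠ j.other) ∨ G.Adj i.1.1 j.1.1 := by
  obtain ⟨hne, hv | he | hi | hj⟩ := h
  · exact .inl ⟨hv, fun ho => hne (Inc.ext_other hv ho)⟩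
  · refine .inr ?_
    obtain hv | ho := i.mem_iff.1 (he ▸ j.2.2)
    · exact absurd (Subtype.ext (Prod.ext hv.symm he)) hne
    · exact ho ▸ i.adj_other
  · exact .inr (by rw [← mem_edgeSet, hi]; exact i.2.1)
  · exact .inr (by rw [← mem_edgeSet, hj]; exact j.2.1)

noncomputable def viLabel (G : SimpleGraph V) {d : ℕ} (C : V → Fin 2) (M : V → Fin d)
    (ε : V → V → Fin d) : VIElem G → Fin 2 × Fin d
  | .inl x => (C x, M x)
  | .inr i => (C i.other, ε i.1.1 i.other)

theorem isVIColoring_viLabel {d : ℕ} (C : G.Coloring (Fin 2)) (M : V → Fin d)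
    (ε : V → V → Fin d) (hM : ∀ u v, G.Adj u v → ε u v ≠ M v)
    (hε : ∀ u v w, G.Adj u v → G.Adj u w → ε u v = ε u w → v = w) :
    IsVIColoring G (finProdFinEquiv ∘ viLabel G C M ε) := by
  have hVI (x : V) (i : Inc G) (hx : x ∈ i.1.2) :
      viLabel G C M ε (.inl x) ≠ viLabel G C M ε (.inr i) := by
    simp only [viLabel, ne_eq, Prod.mk.injEq, not_and_or]
    rcases i.mem_iff.1 hx with rfl | rfl
    · exact .inl (C.valid i.adj_other)
    · exact .inr (hM _ _ i.adj_other).symm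
  have hfin2 : ∀ a b c : Fin 2, a ≠ b → b ≠ c → a = c := by decide
  rintro (x | i) (y | j) h <;> refine finProdFinEquiv.injective.ne ?_
  · exact fun hxy => C.valid h (congrArg Prod.fst hxy)
  · exact hVI x j h
  · exact (hVI y i h).symm
  simp only [viLabel, ne_eq, Prod.mk.injEq, not_and_or]
  rcases h.fst_eq_or_adj with ⟨hv, ho⟩ | hadj
  · exact .inr fun h => ho (hε _ _ _ i.adj_other (hv ▸ j.adj_other) (hv ▸ h))
  · refine .inl fun h => C.valid j.adj_other ?_
    rw [← h]
    exact (hfin2 _ _ _ (C.valid i.adj_other).symm (C.valid hadj)).symm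

theorem IsVIColoring.chiVI_le {k : ℕ} {c : VIElem G → Fin k} (hc : IsVIColoring G c) :
    chiVI G ≤ k :=
  Nat.sInf_le ⟨c, hc⟩

theorem SimpleGraph.degree_le_maxDeg [Fintype V] [DecidableRel G.Adj] (v : V) :
    G.degree v ≤ maxDeg G := by
  rw [← card_neighborSet_eq_degree, ← Nat.card_eq_fintype_card, Nat.card_coe_set_eq]
  exact le_sup (f := fun v => (G.neighborSet v).ncard) (mem_univ v)

theorem chiVI_bipartite_general {V : Type*} [Fintype V]
    (G : SimpleGraph V) (hbip : G.Colorable 2) (hΔ : 4 ≤ maxDeg G) :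
    chiVI G ≤ 2 * maxDeg G := by
  classical
  obtain ⟨C⟩ := hbip
  obtain ⟨M, ε, hM, hε⟩ :=
    exists_vertex_incidence_labels (by omega : 3 ≤ maxDeg G) G.degree_le_maxDeg
  exact (isVIColoring_viLabel C M ε hM hε).chiVI_le

/-- Let `G` be a bipartite finite simple graph (equivalently, a
2-colorable graph) with maximum degree `Δ ≥ 4`. Then `χ_vi(G) ≤ 2Δ`. -/
theorem chiVI_bipartite {V : Type*} [Fintype V] [DecidableEq V]
    (G : SimpleGraph V) (hbip : G.Colorable 2) (hΔ : 4 ≤ maxDeg G) :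
    chiVI G ≤ 2 * maxDeg G :=
  chiVI_bipartite_general G hbip hΔ
end
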